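/- Let ψ₁(x) = (sech(αx))^{√2A/α} and ψ₂(x) = sinh(αx)·ψ₁(x), and let W₂ = ψ₁ψ₂' − ψ₂ψ₁' be their Wronskian. Then the second Crum transform u^C[2] = u − 2·(d²/dx²) ln W₂ of the potential u(x;A) = 2[A² − A(A + α/√2)sech²(αx)] equals 2[A² − A₁A₂·sech²(αx)], where Aₙ = A − nα/√2. -/

import Mathlib

/-! Since `ψ₂ = sinh(αx)·ψ₁`, the Wronskian collapses to `W₂ = ψ₁²·(sinh αx)' = α cosh(αx)·ψ₁²`,
i.e. `W₂ = α cosh(αx)^(1 - 2k)` with `k = √2A/α`. Hence `(ln W₂)'' = (1 - 2k)·(ln cosh αx)''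
= (1 - 2k)α² sech²(αx)`, and subtracting twice this from `u` turns the coefficient
`A(A + α/√2)` of `sech²` into `(A - α/√2)(A - 2α/√2)`. -/

open Real

noncomputable def wronskian (f g : ℝ → ℝ) (x : ℝ) : ℝ := f x * deriv g x - g x * deriv f x

theorem wronskian_self_mul_eq {f g : ℝ → ℝ} {g' x : ℝ} (hf : DifferentiableAt ℝ f x)
    (hg : HasDerivAt g g' x) : wronskian f (fun y => g y * f y) x = g' * f x ^ 2 := by
  have h : HasDerivAt (fun y => g y * f y) (g' * f x + g x * deriv f x) x := hg.mul hf.hasDerivAt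
  rw [wronskian, h.deriv]
  ring

theorem hasDerivAt_cosh_mul (α x : ℝ) : HasDerivAt (fun y => cosh (α * y)) (α * sinh (α * x)) x := by
  simpa [mul_comm] using ((hasDerivAt_id x).const_mul α).cosh

theorem hasDerivAt_sinh_mul (α x : ℝ) : HasDerivAt (fun y => sinh (α * y)) (α * cosh (α * x)) x := by
  simpa [mul_comm] using ((hasDerivAt_id x).const_mul α).sinh

theorem hasDerivAt_log_cosh_mul (α x : ℝ) :
    HasDerivAt (fun y => log (cosh (α * y))) (α * sinh (α * x) / cosh (α * x)) x :=
  (hasDerivAt_cosh_mul α x).log (cosh_pos _).ne'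

theorem hasDerivAt_mul_sinh_div_cosh (α x : ℝ) :
    HasDerivAt (fun y => α * sinh (α * y) / cosh (α * y)) (α ^ 2 / cosh (α * x) ^ 2) x := by
  refine (((hasDerivAt_sinh_mul α x).const_mul α).div (hasDerivAt_cosh_mul α x)
    (cosh_pos _).ne').congr_deriv ?_
  linear_combination (α ^ 2 / cosh (α * x) ^ 2) * cosh_sq_sub_sinh_sq (α * x)

theorem deriv_deriv_const_add_mul_log_cosh (c p α x : ℝ) :
    deriv (deriv fun y => c + p * log (cosh (α * y))) x = p * α ^ 2 * (1 / cosh (α * x)) ^ 2 := by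
  have h : deriv (fun y => c + p * log (cosh (α * y))) =
      fun y => p * (α * sinh (α * y) / cosh (α * y)) :=
    funext fun y => (((hasDerivAt_log_cosh_mul α y).const_mul p).const_add c).deriv
  rw [h, ((hasDerivAt_mul_sinh_div_cosh α x).const_mul p).deriv]
  ring

theorem log_mul_cosh_mul_sech_rpow_sq {α : ℝ} (hα : α ≠ 0) (k x : ℝ) :
    log (α * cosh (α * x) * ((1 / cosh (α * x)) ^ k) ^ 2) =
      log α + (1 - 2 * k) * log (cosh (α * x)) := by
  have hc := cosh_pos (α * x)
  rw [log_mul (by positivity) (by positivity), log_mul hα hc.ne', log_pow,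
    log_rpow (by positivity), one_div, log_inv]
  push_cast
  ring

theorem differentiableAt_sech_mul_rpow (α k x : ℝ) :
    DifferentiableAt ℝ (fun y => (1 / cosh (α * y)) ^ k) x :=
  ((differentiableAt_const 1).div (hasDerivAt_cosh_mul α x).differentiableAt
    (cosh_pos _).ne').rpow_const (Or.inl (one_div_pos.mpr (cosh_pos _)).ne')

theorem morse_potential_sub_crum_correction {α : ℝ} (hα : α ≠ 0) (A σ : ℝ) :
    2 * (A ^ 2 - A * (A + α / √2) * σ) - 2 * ((1 - 2 * (√2 * A / α)) * α ^ 2 * σ) =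
      2 * (A ^ 2 - (A - α / √2) * (A - 2 * α / √2) * σ) := by
  have hs : √2 ^ 2 = 2 := sq_sqrt (by norm_num)
  field_simp
  linear_combination (2 * √2 * A * α * σ - α ^ 2 * σ) * hs

theorem morse_crum2_general (α A : ℝ) (hα : 0 < α)
    (u ψ₁ ψ₂ W₂ uC2 : ℝ → ℝ)
    (hu : u = fun x => 2 * (A ^ 2 - A * (A + α / Real.sqrt 2) * (1 / Real.cosh (α * x)) ^ 2))
    (hψ₁ : ψ₁ = fun x => (1 / Real.cosh (α * x)) ^ (Real.sqrt 2 * A / α))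
    (hψ₂ : ψ₂ = fun x => Real.sinh (α * x) * ψ₁ x)
    (hW₂ : W₂ = fun x => ψ₁ x * deriv ψ₂ x - ψ₂ x * deriv ψ₁ x)
    (huC2 : uC2 = fun x => u x - 2 * deriv (deriv (fun y => Real.log (W₂ y))) x) :
    uC2 = fun x =>
      2 * (A ^ 2 - (A - α / Real.sqrt 2) * (A - 2 * α / Real.sqrt 2) *
        (1 / Real.cosh (α * x)) ^ 2) := by
  set k := √2 * A / α
  have hW : W₂ = wronskian ψ₁ ψ₂ := hW₂
  have hlogW : (fun y => log (W₂ y)) = fun y => log α + (1 - 2 * k) * log (cosh (α * y)) := by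
    funext y
    have hψ₁_diff : DifferentiableAt ℝ ψ₁ y := hψ₁ ▸ differentiableAt_sech_mul_rpow α k y
    rw [hW, hψ₂, wronskian_self_mul_eq hψ₁_diff (hasDerivAt_sinh_mul α y), hψ₁,
      log_mul_cosh_mul_sech_rpow_sq hα.ne']
  funext x
  rw [huC2, hu, hlogW]
  beta_reduce
  rw [deriv_deriv_const_add_mul_log_cosh]
  exact morse_potential_sub_crum_correction hα.ne' A _

/-- The second Crum transform of the Morse-type potential:
with `ψ₁ = (sech(αx))^{√2A/α}`, `ψ₂ = sinh(αx)·ψ₁` and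
`W₂ = ψ₁ψ₂' − ψ₂ψ₁'`, one has
`u − 2(ln W₂)'' = 2[A² − A₁A₂ sech²(αx)]` where `Aₙ = A − nα/√2`. -/
theorem morse_crum2 (α A : ℝ) (hα : 0 < α) (hA : α / Real.sqrt 2 < A)
    (u ψ₁ ψ₂ W₂ uC2 : ℝ → ℝ)
    (hu : u = fun x => 2 * (A ^ 2 - A * (A + α / Real.sqrt 2) * (1 / Real.cosh (α * x)) ^ 2))
    (hψ₁ : ψ₁ = fun x => (1 / Real.cosh (α * x)) ^ (Real.sqrt 2 * A / α))
    (hψ₂ : ψ₂ = fun x => Real.sinh (α * x) * ψ₁ x)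
    (hW₂ : W₂ = fun x => ψ₁ x * deriv ψ₂ x - ψ₂ x * deriv ψ₁ x)
    (huC2 : uC2 = fun x => u x - 2 * deriv (deriv (fun y => Real.log (W₂ y))) x) :
    uC2 = fun x =>
      2 * (A ^ 2 - (A - α / Real.sqrt 2) * (A - 2 * α / Real.sqrt 2) *
        (1 / Real.cosh (α * x)) ^ 2) :=
  morse_crum2_general α A hα u ψ₁ ψ₂ W₂ uC2 hu hψ₁ hψ₂ hW₂ huC2
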